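/- arXiv:1911.02208 — 6 statements merged into one kernel-verified Lean document; each statement's English description precedes it below -/
import Mathlib

section
/- Let f be analytic on the open unit disc 𝔻 with f' never zero, and suppose Re(1 + z f''(z)/f'(z)) > 0 for all z ∈ 𝔻. Fix θ, γ ∈ ℝ and n ∈ ℕ, n ≥ 1, and define R on 𝔻 by R'(z) = f'(z)/(1 + e^{i(θ-2γ)} z^n). Then Re(n + 2 + 2 z R''(z)/R'(z)) > 0 for all z ∈ 𝔻. -/
/-!
Taking logarithmic derivatives of `R' = f' / (1 + c zⁿ)` with `c = e^{i(θ - 2γ)}` gives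
`n + 2 + 2 z R''/R' = 2 (1 + z f''/f') + n (1 - c zⁿ)/(1 + c zⁿ)`. The first summand has positive
real part by hypothesis, and the second has nonnegative real part because the Cayley transform
`w ↦ (1 - w)/(1 + w)` maps the unit disc into the right half-plane.
-/

open Metric Complex

theorem HasDerivAt.div_div_eq_sub_div {𝕜 : Type*} [NontriviallyNormedField 𝕜] {g p : 𝕜 → 𝕜}
    {g' p' q z : 𝕜} (hg : HasDerivAt g g' z) (hp : HasDerivAt p p' z)
    (hq : HasDerivAt (fun w => g w / p w) q z) (hgz : g z ≠ 0) (hpz : p z ≠ 0) :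
    q / (g z / p z) = g' / g z - p' / p z := by
  rw [hq.unique (hg.div hp hpz)]
  field_simp

theorem Complex.re_one_sub_div_one_add_nonneg {w : ℂ} (hw : ‖w‖ ≤ 1) :
    0 ≤ ((1 - w) / (1 + w)).re := by
  have hnum : ((1 - w) * (starRingEnd ℂ) (1 + w)).re = 1 - ‖w‖ ^ 2 := by
    simp only [mul_re, sub_re, add_re, sub_im, add_im, conj_re, conj_im, one_re, one_im,
      Complex.sq_norm, normSq_apply]
    ring
  rw [div_eq_mul_inv, inv_def, ← mul_assoc, re_mul_ofReal, hnum]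
  exact mul_nonneg (sub_nonneg.mpr (pow_le_one₀ (norm_nonneg w) hw))
    (inv_nonneg.mpr (normSq_nonneg _))

theorem one_add_ne_zero_of_norm_lt_one {R : Type*} [SeminormedRing R] [NormOneClass R] {w : R}
    (hw : ‖w‖ < 1) : 1 + w ≠ 0 := by
  intro h
  rw [eq_neg_of_add_eq_zero_right h, norm_neg, norm_one] at hw
  exact lt_irrefl 1 hw

theorem stmt_6_general (f' f'' R'' : ℂ → ℂ) (θ γ : ℝ) (n : ℕ) (hn : 1 ≤ n)
    (hf'' : ∀ z ∈ ball (0 : ℂ) 1, HasDerivAt f' (f'' z) z)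
    (hf'ne : ∀ z ∈ ball (0 : ℂ) 1, f' z ≠ 0)
    (hre : ∀ z ∈ ball (0 : ℂ) 1, (1 + z * f'' z / f' z).re > 0)
    (hR'' : ∀ z ∈ ball (0 : ℂ) 1,
      HasDerivAt (fun w => f' w / (1 + Complex.exp ((θ - 2 * γ) * Complex.I) * w ^ n))
        (R'' z) z) :
    ∀ z ∈ ball (0 : ℂ) 1,
      ((n : ℂ) + 2 + 2 * z * R'' z /
        (f' z / (1 + Complex.exp ((θ - 2 * γ) * Complex.I) * z ^ n))).re > 0 := by
  intro z hz
  set c := Complex.exp ((θ - 2 * γ) * Complex.I)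
  have hn0 : n ≠ 0 := Nat.one_le_iff_ne_zero.mp hn
  have hw : ‖c * z ^ n‖ < 1 := by
    have hc : ‖c‖ = 1 := by simpa using norm_exp_ofReal_mul_I (θ - 2 * γ)
    rw [norm_mul, hc, one_mul, norm_pow]
    exact pow_lt_one₀ (norm_nonneg z) (mem_ball_zero_iff.mp hz) hn0
  have hw0 := one_add_ne_zero_of_norm_lt_one hw
  have hp : HasDerivAt (fun w => 1 + c * w ^ n) (c * (n * z ^ (n - 1))) z :=
    ((hasDerivAt_pow n z).const_mul c).const_add 1
  have hsplit : (n : ℂ) + 2 + 2 * z * R'' z / (f' z / (1 + c * z ^ n)) =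
      2 * (1 + z * f'' z / f' z) + n * ((1 - c * z ^ n) / (1 + c * z ^ n)) := by
    have hzp : 2 * z * (c * (n * z ^ (n - 1))) = 2 * n * (c * z ^ n) := by
      rw [← mul_pow_sub_one hn0 z]
      ring
    rw [mul_div_assoc, (hf'' z hz).div_div_eq_sub_div hp (hR'' z hz) (hf'ne z hz) hw0, mul_sub,
      ← mul_div_assoc _ (c * _), hzp]
    field_simp
    ring
  rw [hsplit, add_re, ← ofReal_ofNat, ← ofReal_natCast, re_ofReal_mul, re_ofReal_mul]
  exact add_pos_of_pos_of_nonneg (mul_pos two_pos (hre z hz))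
    (mul_nonneg n.cast_nonneg (re_one_sub_div_one_add_nonneg hw.le))

open Metric Complex in
theorem stmt_6 (f f' f'' R'' : ℂ → ℂ) (θ γ : ℝ) (n : ℕ) (hn : 1 ≤ n)
    (hf' : ∀ z ∈ ball (0 : ℂ) 1, HasDerivAt f (f' z) z)
    (hf'' : ∀ z ∈ ball (0 : ℂ) 1, HasDerivAt f' (f'' z) z)
    (hf'ne : ∀ z ∈ ball (0 : ℂ) 1, f' z ≠ 0)
    (hre : ∀ z ∈ ball (0 : ℂ) 1, (1 + z * f'' z / f' z).re > 0)
    (hR'' : ∀ z ∈ ball (0 : ℂ) 1,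
      HasDerivAt (fun w => f' w / (1 + Complex.exp ((θ - 2 * γ) * Complex.I) * w ^ n))
        (R'' z) z) :
    ∀ z ∈ ball (0 : ℂ) 1,
      ((n : ℂ) + 2 + 2 * z * R'' z /
        (f' z / (1 + Complex.exp ((θ - 2 * γ) * Complex.I) * z ^ n))).re > 0 :=
  stmt_6_general f' f'' R'' θ γ n hn hf'' hf'ne hre hR''
end

section
/- Let f be analytic on the open unit disc 𝔻 with f' never zero, and suppose Re(1 + z f''(z)/f'(z)) > 0 for all z ∈ 𝔻. Fix θ, γ ∈ ℝ and n ∈ ℕ, n ≥ 1, and define r on 𝔻 by r'(z) = f'(z)/(1 - e^{i(θ-2γ)} z^n). Then Re(n + 2 + 2 z r''(z)/r'(z)) > 0 for all z ∈ 𝔻. -/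
/-!
Write `w = e^{i(θ-2γ)} z^n`, so `|w| < 1` on the disc. The logarithmic derivative of
`r' = f' / (1 - w)` is `z r''/r' = z f''/f' + n w/(1 - w)`, hence
`n + 2 + 2 z r''/r' = 2 (1 + z f''/f') + n (1 + w)/(1 - w)`.
The first summand has positive real part by hypothesis, and the second because the Cayley map
`w ↦ (1 + w)/(1 - w)` sends the unit disc into the right half-plane:
`Re ((1 + w)/(1 - w)) = (1 - |w|²)/|1 - w|²`.
-/

namespace Complex

theorem re_one_add_div_one_sub (w : ℂ) :
    ((1 + w) / (1 - w)).re = (1 - normSq w) / normSq (1 - w) := by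
  rw [div_re]
  simp only [add_re, sub_re, one_re, add_im, sub_im, one_im, normSq_apply]
  ring

theorem re_one_add_div_one_sub_pos {w : ℂ} (hw : ‖w‖ < 1) : 0 < ((1 + w) / (1 - w)).re := by
  have hw_ne : w ≠ 1 := by rintro rfl; simp at hw
  have hnormSq : normSq w < 1 := by
    rw [normSq_eq_norm_sq]
    exact pow_lt_one₀ (norm_nonneg w) hw two_ne_zero
  rw [re_one_add_div_one_sub]
  exact div_pos (by linarith) (normSq_pos.mpr (sub_ne_zero.mpr hw_ne.symm))

end Complex

section NormedField

variable {𝕜 : Type*} [NontriviallyNormedField 𝕜]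

theorem norm_mul_pow_lt_one {c z : 𝕜} {n : ℕ} (hc : ‖c‖ = 1) (hz : ‖z‖ < 1) (hn : n ≠ 0) :
    ‖c * z ^ n‖ < 1 := by
  rw [norm_mul, hc, one_mul, norm_pow]
  exact pow_lt_one₀ (norm_nonneg z) hz hn

theorem mul_deriv_div_one_sub_mul_pow {g : 𝕜 → 𝕜} {g' R c z : 𝕜} {n : ℕ}
    (hg : HasDerivAt g g' z) (hgz : g z ≠ 0) (hd : 1 - c * z ^ n ≠ 0)
    (hR : HasDerivAt (fun w => g w / (1 - c * w ^ n)) R z) :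
    z * R / (g z / (1 - c * z ^ n)) = z * g' / g z + n * (c * z ^ n) / (1 - c * z ^ n) := by
  have hden : HasDerivAt (fun w => 1 - c * w ^ n) (-(c * (n * z ^ (n - 1)))) z := by
    simpa using ((hasDerivAt_pow n z).const_mul c).const_sub 1
  have hpow_pred : z * z ^ (n - 1) * n = z ^ n * n := by
    cases n with
    | zero => simp
    | succ m => simp [pow_succ']
  rw [hR.unique (hg.div hden hd)]
  field_simp
  linear_combination c * g z * hpow_pred

end NormedField

open Metric Complex in
theorem stmt_7_general (f' f'' R'' : ℂ → ℂ) (θ γ : ℝ) (n : ℕ) (hn : 1 ≤ n)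
    (hf'' : ∀ z ∈ ball (0 : ℂ) 1, HasDerivAt f' (f'' z) z)
    (hf'ne : ∀ z ∈ ball (0 : ℂ) 1, f' z ≠ 0)
    (hre : ∀ z ∈ ball (0 : ℂ) 1, (1 + z * f'' z / f' z).re > 0)
    (hR'' : ∀ z ∈ ball (0 : ℂ) 1,
      HasDerivAt (fun w => f' w / (1 - Complex.exp ((θ - 2 * γ) * Complex.I) * w ^ n))
        (R'' z) z) :
    ∀ z ∈ ball (0 : ℂ) 1,
      ((n : ℂ) + 2 + 2 * z * R'' z /
        (f' z / (1 - Complex.exp ((θ - 2 * γ) * Complex.I) * z ^ n))).re > 0 := by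
  intro z hz
  set w := exp ((θ - 2 * γ) * I) * z ^ n
  have hw : ‖w‖ < 1 :=
    norm_mul_pow_lt_one (by rw [norm_exp]; simp) (mem_ball_zero_iff.mp hz) (by omega)
  have hd : 1 - w ≠ 0 := sub_ne_zero.mpr fun h => by simp [← h] at hw
  have hlogDeriv : z * R'' z / (f' z / (1 - w)) = z * f'' z / f' z + n * w / (1 - w) :=
    mul_deriv_div_one_sub_mul_pow (hf'' z hz) (hf'ne z hz) hd (hR'' z hz)
  have hsplit : (n : ℂ) + 2 + 2 * z * R'' z / (f' z / (1 - w)) =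
      ((2 : ℝ) : ℂ) * (1 + z * f'' z / f' z) + (n : ℝ) * ((1 + w) / (1 - w)) := by
    rw [mul_assoc 2, mul_div_assoc, hlogDeriv]
    field_simp
    push_cast
    ring
  rw [hsplit, add_re, re_ofReal_mul, re_ofReal_mul]
  exact add_pos (mul_pos two_pos (hre z hz))
    (mul_pos (Nat.cast_pos.mpr hn) (re_one_add_div_one_sub_pos hw))

open Metric Complex in
theorem stmt_7 (f f' f'' R'' : ℂ → ℂ) (θ γ : ℝ) (n : ℕ) (hn : 1 ≤ n)
    (hf' : ∀ z ∈ ball (0 : ℂ) 1, HasDerivAt f (f' z) z)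
    (hf'' : ∀ z ∈ ball (0 : ℂ) 1, HasDerivAt f' (f'' z) z)
    (hf'ne : ∀ z ∈ ball (0 : ℂ) 1, f' z ≠ 0)
    (hre : ∀ z ∈ ball (0 : ℂ) 1, (1 + z * f'' z / f' z).re > 0)
    (hR'' : ∀ z ∈ ball (0 : ℂ) 1,
      HasDerivAt (fun w => f' w / (1 - Complex.exp ((θ - 2 * γ) * Complex.I) * w ^ n))
        (R'' z) z) :
    ∀ z ∈ ball (0 : ℂ) 1,
      ((n : ℂ) + 2 + 2 * z * R'' z /
        (f' z / (1 - Complex.exp ((θ - 2 * γ) * Complex.I) * z ^ n))).re > 0 :=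
  stmt_7_general f' f'' R'' θ γ n hn hf'' hf'ne hre hR''
end

section
/- Let n ≥ 1 and a ∈ [(n-2)/(n+2), 1). Let R be analytic on 𝔻 with R' never zero and Re(z R''(z)/R'(z)) > -(n+2)/2 on 𝔻, and define S by S'(z) = e^{iθ} z^n R'(z) for a fixed θ ∈ ℝ. Then the function ŵ(z) = (2a S'(z) - (1-a) z S''(z)) / (2 R'(z) + (1-a) z R''(z)) satisfies |ŵ(z)| ≤ |z|^n < 1 for all z ∈ 𝔻. -/
/-!
Write `u = z R''(z) / R'(z)`, `b = 1 - a` and `c = (n + 2) a - n`. Substituting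
`S'' = e^{iθ} (n z^{n-1} R' + z^n R'')` and cancelling `R'(z)` gives
`ŵ(z) = e^{iθ} z^n (c - b u) / (2 + b u)`. The Möbius factor has modulus at most `1` because
`|2 + w|² - |c - w|² = (c + 2) (2 - c + 2 Re w)`, and both factors are nonnegative for `w = b u`:
`c + 2 ≥ 0` is the lower bound on `a`, while `c - 2 = -(n + 2) b` and `Re u > -(n + 2) / 2`.
-/

open Metric Complex

theorem Complex.norm_ofReal_sub_le_norm_ofReal_add {c s : ℝ} {w : ℂ} (hcs : 0 ≤ c + s)
    (hw : c - s ≤ 2 * w.re) : ‖(c : ℂ) - w‖ ≤ ‖(s : ℂ) + w‖ := by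
  rw [← sq_le_sq₀ (norm_nonneg _) (norm_nonneg _), Complex.sq_norm, Complex.sq_norm,
    normSq_apply, normSq_apply]
  simp only [sub_re, sub_im, add_re, add_im, ofReal_re, ofReal_im]
  nlinarith [mul_nonneg hcs (sub_nonneg.mpr hw)]

theorem natCast_mul_pow_pred_mul_self {R : Type*} [Semiring R] (n : ℕ) (x : R) :
    (n : R) * x ^ (n - 1) * x = n * x ^ n := by
  cases n with
  | zero => simp
  | succ m => simp [pow_succ, mul_assoc]

theorem quotient_eq_pow_mul_ratio (n : ℕ) (a : ℝ) (C z r₁ r₂ : ℂ) (hr₁ : r₁ ≠ 0) :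
    (2 * a * (C * z ^ n * r₁) - (1 - a) * z * (C * (n * z ^ (n - 1)) * r₁ + C * z ^ n * r₂)) /
        (2 * r₁ + (1 - a) * z * r₂) =
      C * z ^ n * ((((n + 2) * a - n : ℝ) - (1 - a : ℝ) * (z * r₂ / r₁)) /
        (2 + (1 - a : ℝ) * (z * r₂ / r₁))) := by
  have hu : z * r₂ / r₁ * r₁ = z * r₂ := div_mul_cancel₀ _ hr₁
  have hnum : 2 * a * (C * z ^ n * r₁) - (1 - a) * z * (C * (n * z ^ (n - 1)) * r₁ +
      C * z ^ n * r₂) =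
      r₁ * (C * z ^ n * (((n + 2) * a - n : ℝ) - (1 - a : ℝ) * (z * r₂ / r₁))) := by
    push_cast
    linear_combination (-(1 - (a : ℂ)) * C * r₁) * natCast_mul_pow_pred_mul_self n z
      + ((1 - (a : ℂ)) * C * z ^ n) * hu
  have hden : 2 * r₁ + (1 - a) * z * r₂ = r₁ * (2 + (1 - a : ℝ) * (z * r₂ / r₁)) := by
    push_cast
    linear_combination (-(1 - (a : ℂ))) * hu
  rw [hnum, hden, mul_div_mul_left _ _ hr₁, mul_div_assoc]

theorem stmt_8 (n : ℕ) (hn : 1 ≤ n) (a : ℝ)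
    (ha₁ : ((n : ℝ) - 2) / ((n : ℝ) + 2) ≤ a) (ha₂ : a < 1) (θ : ℝ)
    (R' R'' S'' : ℂ → ℂ)
    (hR'' : ∀ z ∈ ball (0 : ℂ) 1, HasDerivAt R' (R'' z) z)
    (hR'ne : ∀ z ∈ ball (0 : ℂ) 1, R' z ≠ 0)
    (hre : ∀ z ∈ ball (0 : ℂ) 1, (z * R'' z / R' z).re > -(((n : ℝ) + 2) / 2))
    (hS'' : ∀ z ∈ ball (0 : ℂ) 1,
      HasDerivAt (fun w => Complex.exp (θ * Complex.I) * w ^ n * R' w) (S'' z) z) :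
    ∀ z ∈ ball (0 : ℂ) 1,
      ‖(2 * a * (Complex.exp (θ * Complex.I) * z ^ n * R' z)
          - (1 - a) * z * S'' z) /
        (2 * R' z + (1 - a) * z * R'' z)‖ ≤ ‖z‖ ^ n ∧
      ‖z‖ ^ n < 1 := by
  intro z hz
  have hz₁ : ‖z‖ < 1 := mem_ball_zero_iff.mp hz
  refine ⟨?_, pow_lt_one₀ (norm_nonneg z) hz₁ (by omega)⟩
  have hS : S'' z = _ := (hS'' z hz).unique
    (((hasDerivAt_pow n z).const_mul (exp (θ * I))).mul (hR'' z hz))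
  rw [hS, quotient_eq_pow_mul_ratio n a _ z _ _ (hR'ne z hz), norm_mul, norm_mul,
    norm_exp_ofReal_mul_I, one_mul, norm_pow, norm_div]
  refine mul_le_of_le_one_right (by positivity) (div_le_one_of_le₀ ?_ (norm_nonneg _))
  have hn₂ : (0 : ℝ) < n + 2 := by positivity
  have hc : 0 ≤ (n + 2) * a - n + 2 := by
    have := (div_le_iff₀ hn₂).mp ha₁
    linarith
  have hu := hre z hz
  have hw : (n + 2) * a - n - 2 ≤ 2 * ((1 - a : ℝ) * (z * R'' z / R' z)).re := by
    rw [re_ofReal_mul]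
    nlinarith
  exact_mod_cast Complex.norm_ofReal_sub_le_norm_ofReal_add (s := 2) hc hw
end

section
/- Let n ≥ 1 and b ∈ (-1, -(n-2)/(n+2)]. Let r be analytic on 𝔻 with r' never zero and Re(z r''(z)/r'(z)) > -(n+2)/2 on 𝔻, and define s by s'(z) = e^{iθ} z^n r'(z) for a fixed θ ∈ ℝ. Then the function ŵ(z) = (2b s'(z) + (1+b) z s''(z)) / (2 r'(z) + (1+b) z r''(z)) satisfies |ŵ(z)| ≤ |z|^n < 1 for all z ∈ 𝔻. -/
/-! Writing `w = z r''/r'` and `c = 1 + b`, the derivative `s'' = e^{iθ}(z^n r'' + n z^{n-1} r')`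
turns `ŵ(z)` into `e^{iθ} z^n (A + c w)/(2 + c w)` with `A = 2b + n c`. Since `A + 2 = (n + 2) c`,
the hypothesis on `Re w` puts `c w` in the half-plane of points at least as close to `-A` as
to `-2`, and the bound on `b` is exactly `A ≤ 2`. -/

open Metric Complex

theorem norm_ofReal_add_div_ofReal_add_le_one {α β : ℝ} {w : ℂ} (hαβ : α ≤ β)
    (hw : -(α + β) / 2 ≤ w.re) : ‖(α + w) / (β + w)‖ ≤ 1 := by
  rw [norm_div]
  refine div_le_one_of_le₀ ?_ (norm_nonneg _)
  rw [← sq_le_sq₀ (norm_nonneg _) (norm_nonneg _), Complex.sq_norm, Complex.sq_norm,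
    normSq_apply, normSq_apply]
  simp only [add_re, add_im, ofReal_re, ofReal_im, zero_add]
  -- |β + w|² - |α + w|² = (β - α)(α + β + 2 Re w)
  nlinarith

theorem self_mul_deriv_const_mul_pow_mul {f f' : ℂ → ℂ} {g' : ℂ} {z e : ℂ} (n : ℕ)
    (hf : HasDerivAt f (f' z) z) (hg : HasDerivAt (fun w => e * w ^ n * f w) g' z) :
    z * g' = e * z ^ n * (n * f z + z * f' z) := by
  rw [hg.unique (((hasDerivAt_pow n z).const_mul e).mul hf)]
  rcases n with _ | n
  · simp only [pow_zero, mul_one, CharP.cast_eq_zero, zero_mul, zero_add]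
    ring
  · simp only [Nat.add_sub_cancel, pow_succ]
    ring

open Metric Complex in
theorem stmt_9 (n : ℕ) (hn : 1 ≤ n) (b : ℝ)
    (hb₁ : -1 < b) (hb₂ : b ≤ -(((n : ℝ) - 2) / ((n : ℝ) + 2))) (θ : ℝ)
    (r' r'' s'' : ℂ → ℂ)
    (hr'' : ∀ z ∈ ball (0 : ℂ) 1, HasDerivAt r' (r'' z) z)
    (hr'ne : ∀ z ∈ ball (0 : ℂ) 1, r' z ≠ 0)
    (hre : ∀ z ∈ ball (0 : ℂ) 1, (z * r'' z / r' z).re > -(((n : ℝ) + 2) / 2))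
    (hs'' : ∀ z ∈ ball (0 : ℂ) 1,
      HasDerivAt (fun w => Complex.exp (θ * Complex.I) * w ^ n * r' w) (s'' z) z) :
    ∀ z ∈ ball (0 : ℂ) 1,
      ‖(2 * b * (Complex.exp (θ * Complex.I) * z ^ n * r' z)
          + (1 + b) * z * s'' z) /
        (2 * r' z + (1 + b) * z * r'' z)‖ ≤ ‖z‖ ^ n ∧
      ‖z‖ ^ n < 1 := by
  intro z hz
  refine ⟨?_, pow_lt_one₀ (norm_nonneg z) (mem_ball_zero_iff.mp hz) (by omega)⟩
  set e := Complex.exp (θ * Complex.I)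
  set w := z * r'' z / r' z with hw
  have hzs := self_mul_deriv_const_mul_pow_mul n (hr'' z hz) (hs'' z hz)
  have hquot : (2 * b * (e * z ^ n * r' z) + (1 + b) * z * s'' z) /
        (2 * r' z + (1 + b) * z * r'' z) =
      e * z ^ n * (((2 * b + n * (1 + b) : ℝ) + (1 + b) * w) / ((2 : ℝ) + (1 + b) * w)) := by
    have hR := hr'ne z hz
    rw [hw, mul_assoc _ z, hzs, mul_assoc (1 + (b : ℂ)) z]
    field_simp
    push_cast
    ring
  have hbound : ‖((2 * b + n * (1 + b) : ℝ) + (1 + b) * w) / ((2 : ℝ) + (1 + b) * w)‖ ≤ 1 := by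
    have hn2 : (0 : ℝ) < n + 2 := by positivity
    rw [le_neg, div_le_iff₀ hn2] at hb₂
    refine norm_ofReal_add_div_ofReal_add_le_one (by nlinarith) ?_
    have := hre z hz
    simp only [mul_re, ofReal_re, ofReal_im, add_re, one_re, add_im, one_im]
    nlinarith
  rw [hquot, norm_mul, norm_mul, norm_exp_ofReal_mul_I, one_mul, norm_pow]
  exact mul_le_of_le_one_right (by positivity) hbound
end

section
/- Let a ∈ (-1,1), and let H, G, R, S be analytic on 𝔻 with H(z) + G(z) = z/(1-z), G'(z)/H'(z) = (a-z)/(1-az), and S'(z) = e^{iθ} z^n R'(z). Then the dilatation of the convolution, ŵ(z) = ((G ∗ S)'(z))/((H ∗ R)'(z)), where ∗ denotes Hadamard convolution, equals (2a S'(z) - (1-a) z S''(z)) / (2 R'(z) + (1-a) z R''(z)) whenever the denominator is nonzero. -/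
open Metric Complex Filter
open scoped ENNReal NNReal

lemma myCoeff (c : ℕ → ℂ) (n : ℕ) :
    (FormalMultilinearSeries.ofScalars ℂ c).coeff n = c n := by
  have h := FormalMultilinearSeries.ofScalars_apply_eq (E := ℂ) c 1 n
  simp only [one_pow, smul_eq_mul, mul_one] at h
  exact h

lemma myHFPS {c : ℕ → ℂ} {f : ℂ → ℂ}
    (hf : ∀ z ∈ ball (0:ℂ) 1, HasSum (fun k => c k * z ^ k) (f z)) :
    HasFPowerSeriesOnBall f (FormalMultilinearSeries.ofScalars ℂ c) 0 1 := by
  constructor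
  · apply ENNReal.le_of_forall_nnreal_lt
    intro r hr
    apply FormalMultilinearSeries.le_radius_of_tendsto _ (l := 0)
    have hr1 : (r:ℝ) < 1 := by exact_mod_cast hr
    have hz : ((r:ℝ):ℂ) ∈ ball (0:ℂ) 1 := by
      simp only [mem_ball_zero_iff, Complex.norm_real, Real.norm_eq_abs,
        _root_.abs_of_nonneg r.coe_nonneg]
      exact hr1
    have h0 := ((hf _ hz).summable.tendsto_atTop_zero).norm
    rw [norm_zero] at h0
    simpa [myCoeff, norm_mul, norm_pow,
      Complex.norm_real, Real.norm_eq_abs, _root_.abs_of_nonneg r.coe_nonneg] using h0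
  · exact one_pos
  · intro y hy
    rw [mem_emetric_ball_zero_iff] at hy
    have hy' : y ∈ ball (0:ℂ) 1 := by
      rw [mem_ball_zero_iff]
      rw [enorm_eq_nnnorm] at hy
      exact_mod_cast hy
    have := hf y hy'
    simp only [FormalMultilinearSeries.ofScalars_apply_eq, smul_eq_mul, zero_add]
    exact this

lemma myDeriv {c : ℕ → ℂ} {f : ℂ → ℂ}
    (hf : ∀ z ∈ ball (0:ℂ) 1, HasSum (fun k => c k * z ^ k) (f z)) :
    ∀ z ∈ ball (0:ℂ) 1,
      HasSum (fun (k : ℕ) => ((k:ℂ)+1) * c (k+1) * z ^ k) (deriv f z) := by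
  intro z hz
  have hp := myHFPS hf
  have hzn : ‖z‖ < 1 := mem_ball_zero_iff.mp hz
  have hball : (‖z‖₊ : ℝ≥0∞) < 1 := by
    exact_mod_cast hzn
  have hzb : z ∈ Metric.eball (0:ℂ) 1 := by
    rw [mem_emetric_ball_zero_iff, enorm_eq_nnnorm]; exact hball
  have hda : DifferentiableAt ℂ f z := (hp.analyticAt_of_mem hzb).differentiableAt
  have hdf : HasFDerivAt f (fderiv ℂ f z) z := hda.hasFDerivAt
  have hderiv : deriv f z = fderiv ℂ f z 1 := rfl
  have h1 : HasSum
      (fun n => (FormalMultilinearSeries.ofScalars ℂ c).derivSeries n fun _ => z)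
      (fderiv ℂ f z) := by
    apply (hp.hasFPowerSeriesWithinOnBall (s := Set.univ)).hasSum_derivSeries_of_hasFDerivWithinAt
      hball (by simp)
    · rw [zero_add]; exact hdf.hasFDerivWithinAt
    · rw [Set.insert_eq_self.mpr (Set.mem_univ 0)]; exact uniqueDiffOn_univ
  rcases eq_or_ne z 0 with rfl | hz0
  · have hd0 : deriv f 0 = c 1 := by
      rw [hp.hasFPowerSeriesAt.deriv]
      exact myCoeff c 1
    rw [hd0]
    have h5 := hasSum_single (f := fun (k:ℕ) => ((k:ℂ)+1) * c (k+1) * (0:ℂ) ^ k) 0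
      (by intro b hb; simp [zero_pow hb])
    simpa using h5
  · have h2 := h1.mapL (ContinuousLinearMap.apply ℂ ℂ z)
    simp only [ContinuousLinearMap.apply_apply] at h2
    have hval : (fderiv ℂ f z) z = z * deriv f z := by
      rw [hderiv]
      simpa using (fderiv ℂ f z).map_smul z 1
    have hterm : (fun b => (((FormalMultilinearSeries.ofScalars ℂ c).derivSeries b) fun _ => z) z)
        = fun (n:ℕ) => ((n:ℂ)+1) * c (n+1) * z ^ (n+1) := by
      funext n
      rw [FormalMultilinearSeries.derivSeries_apply_diag, FormalMultilinearSeries.ofScalars_apply_eq]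
      push_cast [nsmul_eq_mul, smul_eq_mul]
      ring
    rw [hterm, hval] at h2
    have h4 := h2.mul_left z⁻¹
    have e2 : (fun (i:ℕ) => z⁻¹ * (((i:ℂ)+1) * c (i+1) * z ^ (i+1)))
        = fun (k:ℕ) => ((k:ℂ)+1) * c (k+1) * z ^ k := by
      funext i
      rw [pow_succ]
      field_simp
    have e3 : z⁻¹ * (z * deriv f z) = deriv f z := by field_simp
    rwa [e2, e3] at h4

lemma myUnique {c d : ℕ → ℂ} {f : ℂ → ℂ}
    (hc : ∀ z ∈ ball (0:ℂ) 1, HasSum (fun k => c k * z ^ k) (f z))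
    (hd : ∀ z ∈ ball (0:ℂ) 1, HasSum (fun k => d k * z ^ k) (f z)) : c = d := by
  have h := (myHFPS hc).hasFPowerSeriesAt.eq_formalMultilinearSeries
    (myHFPS hd).hasFPowerSeriesAt
  exact FormalMultilinearSeries.ofScalars_series_injective ℂ ℂ h

lemma myShift {f : ℕ → ℂ} {L : ℂ} (h : HasSum (fun n => f (n+1)) L) (h0 : f 0 = 0) :
    HasSum f L := by
  have := (hasSum_nat_add_iff (f := f) 1).mp h
  simpa [h0] using this

lemma mySummable {c d : ℕ → ℂ} {f g : ℂ → ℂ}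
    (hc : ∀ z ∈ ball (0:ℂ) 1, HasSum (fun k => c k * z ^ k) (f z))
    (hd : ∀ z ∈ ball (0:ℂ) 1, HasSum (fun k => d k * z ^ k) (g z)) :
    ∀ z ∈ ball (0:ℂ) 1, Summable (fun k => c k * d k * z ^ k) := by
  intro z hz
  have hzn : ‖z‖ < 1 := mem_ball_zero_iff.mp hz
  have hzn0 : 0 ≤ ‖z‖ := norm_nonneg z
  set r : ℝ := Real.sqrt ((‖z‖ + 1)/2) with hrdef
  have hr0 : 0 < (‖z‖+1)/2 := by positivity
  have hrpos : 0 < r := Real.sqrt_pos.mpr hr0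
  have hsq : r^2 = (‖z‖+1)/2 := Real.sq_sqrt hr0.le
  have hr1 : r < 1 := by nlinarith
  have hz2 : ‖z‖ < r^2 := by rw [hsq]; linarith
  have hrb : ((r:ℝ):ℂ) ∈ ball (0:ℂ) 1 := by
    rw [mem_ball_zero_iff, Complex.norm_real, Real.norm_eq_abs, abs_of_pos hrpos]
    exact hr1
  have ec : ∀ᶠ k in atTop, ‖c k * ((r:ℝ):ℂ) ^ k‖ ≤ 1 := by
    have t1 := ((hc _ hrb).summable.tendsto_atTop_zero).norm
    rw [norm_zero] at t1
    exact (t1.eventually_lt_const one_pos).mono fun k hk => hk.le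
  have ed : ∀ᶠ k in atTop, ‖d k * ((r:ℝ):ℂ) ^ k‖ ≤ 1 := by
    have t1 := ((hd _ hrb).summable.tendsto_atTop_zero).norm
    rw [norm_zero] at t1
    exact (t1.eventually_lt_const one_pos).mono fun k hk => hk.le
  apply Summable.of_norm_bounded_eventually_nat (g := fun k => (‖z‖/r^2)^k)
  · exact summable_geometric_of_lt_one (by positivity) ((div_lt_one (by positivity)).mpr hz2)
  · filter_upwards [ec, ed] with k hck hdk
    have hck' : ‖c k‖ * r ^ k ≤ 1 := by
      simpa [norm_mul, norm_pow, Complex.norm_real, Real.norm_eq_abs,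
        abs_of_pos hrpos] using hck
    have hdk' : ‖d k‖ * r ^ k ≤ 1 := by
      simpa [norm_mul, norm_pow, Complex.norm_real, Real.norm_eq_abs,
        abs_of_pos hrpos] using hdk
    have key : ‖c k * d k * z ^ k‖
        = (‖c k‖ * r ^ k) * (‖d k‖ * r ^ k) * (‖z‖/r^2)^k := by
      rw [norm_mul, norm_mul, norm_pow, div_pow]
      rw [← pow_mul]
      field_simp
      ring
    rw [key]
    have hpk : (0:ℝ) ≤ (‖z‖/r^2)^k := by positivity
    have h1 : (0:ℝ) ≤ ‖d k‖ * r ^ k := by positivity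
    nlinarith [mul_le_mul hck' hdk' h1 zero_le_one]

lemma myOneSub {w : ℂ} (hw : w ∈ ball (0:ℂ) 1) : (1:ℂ) - w ≠ 0 := by
  intro h
  have hw1 : w = 1 := by linear_combination -h
  have : ‖w‖ < 1 := mem_ball_zero_iff.mp hw
  rw [hw1] at this
  simp at this

lemma mySq : ∀ w ∈ ball (0:ℂ) 1,
    HasSum (fun (k:ℕ) => ((k:ℂ)+1) * w ^ k) ((((1:ℂ)-w)^2)⁻¹) := by
  have geo : ∀ w ∈ ball (0:ℂ) 1,
      HasSum (fun (k:ℕ) => (1:ℂ) * w ^ k) ((fun u => ((1:ℂ)-u)⁻¹) w) := by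
    intro w hw
    simpa using hasSum_geometric_of_norm_lt_one (mem_ball_zero_iff.mp hw)
  have geo1 := myDeriv geo
  intro w hw
  have h1w := myOneSub hw
  have hder : deriv (fun u => ((1:ℂ)-u)⁻¹) w = (((1:ℂ)-w)^2)⁻¹ := by
    have h : HasDerivAt (fun u => ((1:ℂ)-u)⁻¹) ((((1:ℂ)-w)^2)⁻¹) w := by
      have h0 : HasDerivAt (fun u : ℂ => (1:ℂ) - u) (-1) w := by
        simpa using (hasDerivAt_id w).const_sub 1
      have := h0.inv h1w
      convert this using 1
      any_goals rfl
      field_simp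
    exact h.deriv
  have := geo1 w hw
  rw [hder] at this
  simpa using this

lemma myCube : ∀ w ∈ ball (0:ℂ) 1,
    HasSum (fun (k:ℕ) => ((k:ℂ)+1) * ((k:ℂ)+2) * w ^ k) (2 * (((1:ℂ)-w)^3)⁻¹) := by
  have cube0 := myDeriv (c := fun (k:ℕ) => ((k:ℂ)+1)) (f := fun w => (((1:ℂ)-w)^2)⁻¹) mySq
  intro w hw
  have h1w := myOneSub hw
  have hder : deriv (fun u => (((1:ℂ)-u)^2)⁻¹) w = 2 * (((1:ℂ)-w)^3)⁻¹ := by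
    have h0 : HasDerivAt (fun u : ℂ => (1:ℂ) - u) (-1) w := by
      simpa using (hasDerivAt_id w).const_sub 1
    have h1 : HasDerivAt (fun u : ℂ => ((1:ℂ)-u)^2) ((2:ℕ) * ((1:ℂ)-w)^1 * (-1)) w :=
      h0.pow 2
    have h2 := h1.inv (pow_ne_zero 2 h1w)
    have : HasDerivAt (fun u => (((1:ℂ)-u)^2)⁻¹) (2 * (((1:ℂ)-w)^3)⁻¹) w := by
      convert h2 using 1
      any_goals rfl
      field_simp
      ring
    exact this.deriv
  have := cube0 w hw
  rw [hder] at this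
  convert this using 2 with k
  push_cast
  ring

lemma myEH (a : ℝ) (ha : ((1:ℂ)+(a:ℂ)) ≠ 0) : ∀ w ∈ ball (0:ℂ) 1,
    HasSum (fun (k:ℕ) => ((((k:ℂ)+1) + (1-(a:ℂ))*(k:ℂ)*((k:ℂ)+1)/2) / (1+(a:ℂ))) * w ^ k)
      ((1 - (a:ℂ)*w) / ((1+(a:ℂ))*(1-w)^3)) := by
  intro w hw
  have h1w := myOneSub hw
  have A := mySq w hw
  have B := (myCube w hw).mul_left ((1-(a:ℂ))/2 * w)
  have hBf : (fun (n:ℕ) => (fun (k:ℕ) => (1-(a:ℂ))/2 * (k:ℂ) * ((k:ℂ)+1) * w ^ k) (n+1))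
      = fun (n:ℕ) => ((1-(a:ℂ))/2 * w) * (((n:ℂ)+1) * ((n:ℂ)+2) * w ^ n) := by
    funext n
    push_cast
    ring
  have B' : HasSum (fun (k:ℕ) => (1-(a:ℂ))/2 * (k:ℂ) * ((k:ℂ)+1) * w ^ k)
      (((1-(a:ℂ))/2 * w) * (2 * (((1:ℂ)-w)^3)⁻¹)) := by
    apply myShift (by rw [hBf]; exact B)
    simp
  have S := (A.add B').mul_left (1+(a:ℂ))⁻¹
  have hterm : (fun (k:ℕ) => (1+(a:ℂ))⁻¹ * (((k:ℂ)+1) * w ^ k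
        + (1-(a:ℂ))/2 * (k:ℂ) * ((k:ℂ)+1) * w ^ k))
      = fun (k:ℕ) => ((((k:ℂ)+1) + (1-(a:ℂ))*(k:ℂ)*((k:ℂ)+1)/2) / (1+(a:ℂ))) * w ^ k := by
    funext k
    field_simp
  have hval : (1+(a:ℂ))⁻¹ * ((((1:ℂ)-w)^2)⁻¹ + ((1-(a:ℂ))/2 * w) * (2 * (((1:ℂ)-w)^3)⁻¹))
      = (1 - (a:ℂ)*w) / ((1+(a:ℂ))*(1-w)^3) := by
    field_simp
    ring
  rw [hterm, hval] at S
  exact S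

lemma myEG (a : ℝ) (ha : ((1:ℂ)+(a:ℂ)) ≠ 0) : ∀ w ∈ ball (0:ℂ) 1,
    HasSum (fun (k:ℕ) => ((((a:ℂ)*(((k:ℂ)+1)*((k:ℂ)+2)) - (k:ℂ)*((k:ℂ)+1))/2) / (1+(a:ℂ))) * w ^ k)
      (((a:ℂ) - w) / ((1+(a:ℂ))*(1-w)^3)) := by
  intro w hw
  have h1w := myOneSub hw
  have C1 := (myCube w hw).mul_left ((a:ℂ)/2)
  have C2 := (myCube w hw).mul_left (w/2)
  have hCf : (fun (n:ℕ) => (fun (k:ℕ) => (1:ℂ)/2 * (k:ℂ) * ((k:ℂ)+1) * w ^ k) (n+1))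
      = fun (n:ℕ) => (w/2) * (((n:ℂ)+1) * ((n:ℂ)+2) * w ^ n) := by
    funext n
    push_cast
    ring
  have C2' : HasSum (fun (k:ℕ) => (1:ℂ)/2 * (k:ℂ) * ((k:ℂ)+1) * w ^ k)
      ((w/2) * (2 * (((1:ℂ)-w)^3)⁻¹)) := by
    apply myShift (by rw [hCf]; exact C2)
    simp
  have S := (C1.sub C2').mul_left (1+(a:ℂ))⁻¹
  have hterm : (fun (k:ℕ) => (1+(a:ℂ))⁻¹ * ((a:ℂ)/2 * (((k:ℂ)+1) * ((k:ℂ)+2) * w ^ k)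
        - (1:ℂ)/2 * (k:ℂ) * ((k:ℂ)+1) * w ^ k))
      = fun (k:ℕ) => ((((a:ℂ)*(((k:ℂ)+1)*((k:ℂ)+2)) - (k:ℂ)*((k:ℂ)+1))/2) / (1+(a:ℂ))) * w ^ k := by
    funext k
    field_simp
  have hval : (1+(a:ℂ))⁻¹ * ((a:ℂ)/2 * (2 * (((1:ℂ)-w)^3)⁻¹) - (w/2) * (2 * (((1:ℂ)-w)^3)⁻¹))
      = ((a:ℂ) - w) / ((1+(a:ℂ))*(1-w)^3) := by
    field_simp
  rw [hterm, hval] at S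
  exact S

lemma myEmem {w : ℂ} (hw : w ∈ ball (0:ℂ) 1) : w ∈ Metric.eball (0:ℂ) 1 := by
  rw [mem_emetric_ball_zero_iff, enorm_eq_nnnorm]
  exact_mod_cast mem_ball_zero_iff.mp hw



open Metric Complex in
theorem stmt_14 (a : ℝ) (ha₁ : -1 < a) (ha₂ : a < 1) (θ : ℝ) (n : ℕ)
    (cH cG cR cS : ℕ → ℂ) (H G R S : ℂ → ℂ)
    (hH : ∀ z ∈ ball (0 : ℂ) 1, HasSum (fun k => cH k * z ^ k) (H z))
    (hG : ∀ z ∈ ball (0 : ℂ) 1, HasSum (fun k => cG k * z ^ k) (G z))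
    (hR : ∀ z ∈ ball (0 : ℂ) 1, HasSum (fun k => cR k * z ^ k) (R z))
    (hS : ∀ z ∈ ball (0 : ℂ) 1, HasSum (fun k => cS k * z ^ k) (S z))
    (hHG : ∀ z ∈ ball (0 : ℂ) 1, H z + G z = z / (1 - z))
    (hHne : ∀ z ∈ ball (0 : ℂ) 1, deriv H z ≠ 0)
    (hdil : ∀ z ∈ ball (0 : ℂ) 1,
      deriv G z / deriv H z = ((a : ℂ) - z) / (1 - (a : ℂ) * z))
    (hS' : ∀ z ∈ ball (0 : ℂ) 1,
      deriv S z = Complex.exp (θ * Complex.I) * z ^ n * deriv R z) :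
    ∀ z ∈ ball (0 : ℂ) 1,
      2 * deriv R z + (1 - (a : ℂ)) * z * deriv (deriv R) z ≠ 0 →
      deriv (fun w => ∑' k, cG k * cS k * w ^ k) z /
          deriv (fun w => ∑' k, cH k * cR k * w ^ k) z
        = (2 * (a : ℂ) * deriv S z - (1 - (a : ℂ)) * z * deriv (deriv S) z) /
          (2 * deriv R z + (1 - (a : ℂ)) * z * deriv (deriv R) z) := by
  have ha : ((1:ℂ)+(a:ℂ)) ≠ 0 := by
    intro h
    have h2 : (a:ℂ) = -1 := by linear_combination h
    have h3 : a = -1 := by exact_mod_cast h2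
    linarith
  -- derivative formulas for H and G
  have hderivH : ∀ w ∈ ball (0:ℂ) 1,
      deriv H w = (1 - (a:ℂ)*w) / ((1+(a:ℂ))*(1-w)^3) := by
    intro w hw
    have h1w := myOneSub hw
    have hwn : ‖w‖ < 1 := mem_ball_zero_iff.mp hw
    have h1aw : (1:ℂ) - (a:ℂ)*w ≠ 0 := by
      intro h
      have h2 : (a:ℂ)*w = 1 := by linear_combination -h
      have h3 : ‖(a:ℂ)*w‖ = 1 := by rw [h2]; simp
      have h4 : ‖(a:ℂ)*w‖ < 1 := by
        rw [norm_mul]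
        calc ‖(a:ℂ)‖*‖w‖ ≤ 1*‖w‖ := by
              apply mul_le_mul_of_nonneg_right _ (norm_nonneg w)
              rw [Complex.norm_real, Real.norm_eq_abs]
              exact abs_le.mpr ⟨ha₁.le, ha₂.le⟩
          _ < 1 := by rw [one_mul]; exact hwn
      linarith [h3 ▸ h4]
    have hHa : DifferentiableAt ℂ H w := ((myHFPS hH).analyticAt_of_mem (myEmem hw)).differentiableAt
    have hGa : DifferentiableAt ℂ G w := ((myHFPS hG).analyticAt_of_mem (myEmem hw)).differentiableAt
    have hev : (fun u => H u + G u) =ᶠ[nhds w] (fun u => u/(1-u)) :=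
      Filter.eventuallyEq_of_mem (isOpen_ball.mem_nhds hw) (fun u hu => hHG u hu)
    have hdiv : deriv (fun u : ℂ => u/(1-u)) w = (((1:ℂ)-w)^2)⁻¹ := by
      have h0 : HasDerivAt (fun u : ℂ => (1:ℂ) - u) (-1) w := by
        simpa using (hasDerivAt_id w).const_sub 1
      have hd := (hasDerivAt_id w).div h0 h1w
      have : HasDerivAt (fun u : ℂ => u/(1-u)) ((((1:ℂ)-w)^2)⁻¹) w := by
        convert hd using 1
        any_goals rfl
        field_simp
        simp
      exact this.deriv
    have hsum : deriv H w + deriv G w = (((1:ℂ)-w)^2)⁻¹ := by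
      rw [← deriv_fun_add hHa hGa, hev.deriv_eq, hdiv]
    have hGeq : deriv G w = ((a:ℂ)-w)/(1-(a:ℂ)*w) * deriv H w :=
      (div_eq_iff (hHne w hw)).mp (hdil w hw)
    rw [hGeq] at hsum
    field_simp at hsum ⊢
    linear_combination hsum
  have hderivG : ∀ w ∈ ball (0:ℂ) 1,
      deriv G w = ((a:ℂ) - w) / ((1+(a:ℂ))*(1-w)^3) := by
    intro w hw
    have h1w := myOneSub hw
    have hwn : ‖w‖ < 1 := mem_ball_zero_iff.mp hw
    have h1aw : (1:ℂ) - (a:ℂ)*w ≠ 0 := by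
      intro h
      have h2 : (a:ℂ)*w = 1 := by linear_combination -h
      have h3 : ‖(a:ℂ)*w‖ = 1 := by rw [h2]; simp
      have h4 : ‖(a:ℂ)*w‖ < 1 := by
        rw [norm_mul]
        calc ‖(a:ℂ)‖*‖w‖ ≤ 1*‖w‖ := by
              apply mul_le_mul_of_nonneg_right _ (norm_nonneg w)
              rw [Complex.norm_real, Real.norm_eq_abs]
              exact abs_le.mpr ⟨ha₁.le, ha₂.le⟩
          _ < 1 := by rw [one_mul]; exact hwn
      linarith [h3 ▸ h4]
    have hGeq : deriv G w = ((a:ℂ)-w)/(1-(a:ℂ)*w) * deriv H w :=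
      (div_eq_iff (hHne w hw)).mp (hdil w hw)
    rw [hGeq, hderivH w hw]
    field_simp
  -- coefficient identities
  have hcH : (fun (k:ℕ) => ((k:ℂ)+1) * cH (k+1))
      = fun (k:ℕ) => ((((k:ℂ)+1) + (1-(a:ℂ))*(k:ℂ)*((k:ℂ)+1)/2) / (1+(a:ℂ))) := by
    apply myUnique (f := fun w => deriv H w) (myDeriv hH)
    intro w hw
    rw [hderivH w hw]
    exact myEH a ha w hw
  have hcG : (fun (k:ℕ) => ((k:ℂ)+1) * cG (k+1))
      = fun (k:ℕ) => ((((a:ℂ)*(((k:ℂ)+1)*((k:ℂ)+2)) - (k:ℂ)*((k:ℂ)+1))/2) / (1+(a:ℂ))) := by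
    apply myUnique (f := fun w => deriv G w) (myDeriv hG)
    intro w hw
    rw [hderivG w hw]
    exact myEG a ha w hw
  intro z hz hden
  -- second derivative series for S and R
  have dSz := myDeriv hS z hz
  have dRz := myDeriv hR z hz
  have ddSz := myDeriv (c := fun (k:ℕ) => ((k:ℂ)+1) * cS (k+1)) (myDeriv hS) z hz
  have ddRz := myDeriv (c := fun (k:ℕ) => ((k:ℂ)+1) * cR (k+1)) (myDeriv hR) z hz
  have hshS : (fun (m:ℕ) => (fun (k:ℕ) => (k:ℂ) * (((k:ℂ)+1) * cS (k+1)) * z ^ k) (m+1))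
      = fun (m:ℕ) => z * (((m:ℂ)+1) * ((((m+1:ℕ):ℂ)+1) * cS (m+1+1)) * z ^ m) := by
    funext m
    push_cast
    ring
  have zddSz : HasSum (fun (k:ℕ) => (k:ℂ) * (((k:ℂ)+1) * cS (k+1)) * z ^ k)
      (z * deriv (deriv S) z) := by
    apply myShift (by rw [hshS]; exact ddSz.mul_left z)
    simp
  have hshR : (fun (m:ℕ) => (fun (k:ℕ) => (k:ℂ) * (((k:ℂ)+1) * cR (k+1)) * z ^ k) (m+1))
      = fun (m:ℕ) => z * (((m:ℂ)+1) * ((((m+1:ℕ):ℂ)+1) * cR (m+1+1)) * z ^ m) := by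
    funext m
    push_cast
    ring
  have zddRz : HasSum (fun (k:ℕ) => (k:ℂ) * (((k:ℂ)+1) * cR (k+1)) * z ^ k)
      (z * deriv (deriv R) z) := by
    apply myShift (by rw [hshR]; exact ddRz.mul_left z)
    simp
  -- convolution functions
  have hPsum : ∀ w ∈ ball (0:ℂ) 1, HasSum (fun (k:ℕ) => cG k * cS k * w ^ k)
      ((fun w => ∑' k, cG k * cS k * w ^ k) w) :=
    fun w hw => ((mySummable hG hS) w hw).hasSum
  have hQsum : ∀ w ∈ ball (0:ℂ) 1, HasSum (fun (k:ℕ) => cH k * cR k * w ^ k)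
      ((fun w => ∑' k, cH k * cR k * w ^ k) w) :=
    fun w hw => ((mySummable hH hR) w hw).hasSum
  have dP := myDeriv (c := fun (k:ℕ) => cG k * cS k) hPsum z hz
  have dQ := myDeriv (c := fun (k:ℕ) => cH k * cR k) hQsum z hz
  -- identify deriv P
  have TP := (dSz.mul_left ((a:ℂ)/(1+(a:ℂ)))).sub
    (zddSz.mul_left ((1-(a:ℂ))/(2*(1+(a:ℂ)))))
  have htPeq : (fun (k:ℕ) => ((k:ℂ)+1) * (cG (k+1) * cS (k+1)) * z ^ k)
      = fun (k:ℕ) => (a:ℂ)/(1+(a:ℂ)) * (((k:ℂ)+1) * cS (k+1) * z ^ k)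
        - (1-(a:ℂ))/(2*(1+(a:ℂ))) * ((k:ℂ) * (((k:ℂ)+1) * cS (k+1)) * z ^ k) := by
    funext k
    have h1 := congrFun hcG k
    have h2 : ((k:ℂ)+1) * (cG (k+1) * cS (k+1)) * z ^ k
        = ((((a:ℂ)*(((k:ℂ)+1)*((k:ℂ)+2)) - (k:ℂ)*((k:ℂ)+1))/2) / (1+(a:ℂ))) * cS (k+1) * z ^ k := by
      rw [← h1]; ring
    rw [h2]
    field_simp
    ring
  rw [htPeq] at dP
  have hPval := dP.unique TP
  -- identify deriv Q
  have TQ := (dRz.mul_left ((1:ℂ)/(1+(a:ℂ)))).add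
    (zddRz.mul_left ((1-(a:ℂ))/(2*(1+(a:ℂ)))))
  have htQeq : (fun (k:ℕ) => ((k:ℂ)+1) * (cH (k+1) * cR (k+1)) * z ^ k)
      = fun (k:ℕ) => (1:ℂ)/(1+(a:ℂ)) * (((k:ℂ)+1) * cR (k+1) * z ^ k)
        + (1-(a:ℂ))/(2*(1+(a:ℂ))) * ((k:ℂ) * (((k:ℂ)+1) * cR (k+1)) * z ^ k) := by
    funext k
    have h1 := congrFun hcH k
    have h2 : ((k:ℂ)+1) * (cH (k+1) * cR (k+1)) * z ^ k
        = ((((k:ℂ)+1) + (1-(a:ℂ))*(k:ℂ)*((k:ℂ)+1)/2) / (1+(a:ℂ))) * cR (k+1) * z ^ k := by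
      rw [← h1]; ring
    rw [h2]
    field_simp
  rw [htQeq] at dQ
  have hQval := dQ.unique TQ
  rw [hPval, hQval]
  have h2a : (2*(1+(a:ℂ)))⁻¹ ≠ 0 := inv_ne_zero (mul_ne_zero two_ne_zero ha)
  have e1 : (a:ℂ)/(1+(a:ℂ)) * deriv S z - (1-(a:ℂ))/(2*(1+(a:ℂ))) * (z * deriv (deriv S) z)
      = (2*(1+(a:ℂ)))⁻¹ * (2 * (a:ℂ) * deriv S z - (1 - (a:ℂ)) * z * deriv (deriv S) z) := by
    field_simp
  have e2 : (1:ℂ)/(1+(a:ℂ)) * deriv R z + (1-(a:ℂ))/(2*(1+(a:ℂ))) * (z * deriv (deriv R) z)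
      = (2*(1+(a:ℂ)))⁻¹ * (2 * deriv R z + (1 - (a:ℂ)) * z * deriv (deriv R) z) := by
    field_simp
  rw [e1, e2, mul_div_mul_left _ _ h2a]
end

section
/- Let n ≥ 1, a ∈ [(n-2)/(n+2), 1), θ, γ, η ∈ ℝ. Define f on 𝔻 by z f'(z) = z/((1+ze^{i(η+γ)})(1+ze^{-i(η-γ)})), f(0)=0, and R by R(0)=0, R'(z) = f'(z)/(1+e^{i(θ-2γ)} z^n). Assume Re(1 + z f''(z)/f'(z)) > 0 on 𝔻. Then the function ŵ(z) = -e^{iθ} z^n [ ((n-(n+2)a)/(1-a) + zR''(z)/R'(z)) / (2/(1-a) + zR''(z)/R'(z)) ] satisfies |ŵ(z)| < 1 for all z ∈ 𝔻. -/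
/-!
Writing `p = z R''/R'` and `u = e^{i(θ-2γ)} z^n`, the quotient rule for logarithmic derivatives
gives `n + 2 + 2p = 2(1 + z f''/f') + n (1 - u)/(1 + u)`, which has positive real part since
`|u| < 1`. With `t = p + (n+2)/2` and `c = (n - 2 - (n+2)a) / (2(1-a)) ≤ 0`, the bracket in `ŵ`
is `(t + c)/(t - c)`, and a point of the right half-plane is at least as far from `c` as from `-c`.
-/

theorem one_add_ne_zero_of_norm_lt_one_s16 {R : Type*} [NormedRing R] [NormOneClass R] {u : R}
    (hu : ‖u‖ < 1) : 1 + u ≠ 0 :=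
  fun h => by simp [eq_neg_of_add_eq_zero_right h] at hu

namespace Complex

theorem re_one_sub_div_one_add_pos {u : ℂ} (hu : ‖u‖ < 1) : 0 < ((1 - u) / (1 + u)).re := by
  have hre : ((1 - u) / (1 + u)).re = (1 - normSq u) / normSq (1 + u) := by
    rw [div_re, ← add_div]
    congr 1
    simp only [normSq_apply, sub_re, add_re, sub_im, add_im, one_re, one_im]
    ring
  rw [hre, normSq_eq_norm_sq]
  have : ‖u‖ ^ 2 < 1 := pow_lt_one₀ (norm_nonneg u) hu two_ne_zero
  exact div_pos (by linarith) (normSq_pos.mpr (one_add_ne_zero_of_norm_lt_one_s16 hu))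

theorem norm_add_ofReal_div_sub_ofReal_le_one {t : ℂ} {c : ℝ} (ht : 0 < t.re) (hc : c ≤ 0) :
    ‖(t + c) / (t - c)‖ ≤ 1 := by
  have hne : t - c ≠ 0 := fun h => by
    have := congrArg re h
    simp only [sub_re, ofReal_re, zero_re] at this
    linarith
  rw [norm_div, div_le_one (norm_pos_iff.mpr hne), norm_def, norm_def]
  apply Real.sqrt_le_sqrt
  simp only [normSq_apply, add_re, add_im, sub_re, sub_im, ofReal_re, ofReal_im]
  nlinarith

theorem re_sub_mul_div_one_add_add_pos {q u : ℂ} {n : ℝ} (hq : 0 < (1 + q).re)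
    (hu : ‖u‖ < 1) (hn : 0 ≤ n) : 0 < (q - n * (u / (1 + u)) + (n + 2) / 2).re := by
  have hD := one_add_ne_zero_of_norm_lt_one_s16 hu
  have hsplit : q - n * (u / (1 + u)) + (n + 2) / 2
      = (1 + q) + (n / 2 : ℝ) * ((1 - u) / (1 + u)) := by
    push_cast
    field_simp
    ring
  rw [hsplit, add_re, re_ofReal_mul]
  have := re_one_sub_div_one_add_pos hu
  positivity

end Complex

theorem mul_logDeriv_one_add_const_mul_pow {𝕜 : Type*} [NontriviallyNormedField 𝕜]
    (w z : 𝕜) (n : ℕ) :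
    z * logDeriv (fun y => 1 + w * y ^ n) z = n * (w * z ^ n / (1 + w * z ^ n)) := by
  rw [logDeriv_apply, (((hasDerivAt_pow n z).const_mul w).const_add 1).deriv]
  rcases n with _ | n
  · simp
  · simp only [Nat.add_sub_cancel, pow_succ]
    ring

theorem mul_deriv_div_eq_of_eventuallyEq_div_one_add_const_mul_pow {𝕜 : Type*}
    [NontriviallyNormedField 𝕜] {g g' h h' : 𝕜 → 𝕜} {w z : 𝕜} {n : ℕ}
    (hh : h =ᶠ[nhds z] fun y => g y / (1 + w * y ^ n))
    (hg : HasDerivAt g (g' z) z) (hh' : HasDerivAt h (h' z) z)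
    (hgz : g z ≠ 0) (hD : 1 + w * z ^ n ≠ 0) :
    z * h' z / h z = z * g' z / g z - n * (w * z ^ n / (1 + w * z ^ n)) := by
  have hquot := logDeriv_div z hgz hD hg.differentiableAt
    (by fun_prop : DifferentiableAt 𝕜 (fun y => 1 + w * y ^ n) z)
  rw [← (logDeriv_congr_nhds hh).eq_of_nhds, logDeriv_apply, logDeriv_apply,
    hh'.deriv, hg.deriv] at hquot
  rw [mul_div_assoc, mul_div_assoc, hquot, mul_sub, mul_logDeriv_one_add_const_mul_pow]

theorem norm_div_le_one_of_re_pos (n a : ℝ) (p : ℂ) (hn : 0 < n + 2)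
    (ha₁ : (n - 2) / (n + 2) ≤ a) (ha₂ : a < 1) (hp : 0 < (p + ((n : ℂ) + 2) / 2).re) :
    ‖((n - (n + 2) * a) / (1 - a) + p) / (2 / (1 - a) + p)‖ ≤ 1 := by
  set c : ℝ := (n - 2 - (n + 2) * a) / (2 * (1 - a))
  have ha : (0 : ℝ) < 1 - a := by linarith
  have hc : c ≤ 0 := div_nonpos_of_nonpos_of_nonneg
    (by linarith [(div_le_iff₀ hn).mp ha₁]) (by linarith)
  have haC : (1 : ℂ) - a ≠ 0 := by exact_mod_cast ha.ne'
  have hnum : (n - (n + 2) * a) / (1 - a) + p = p + (n + 2) / 2 + c := by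
    simp only [c]
    push_cast
    field_simp
    ring
  have hden : 2 / (1 - a) + p = p + (n + 2) / 2 - c := by
    simp only [c]
    push_cast
    field_simp
    ring
  rw [hnum, hden]
  exact Complex.norm_add_ofReal_div_sub_ofReal_le_one hp hc

open Metric Complex in
theorem stmt_16_general (n : ℕ) (hn : 1 ≤ n) (a : ℝ)
    (ha₁ : ((n : ℝ) - 2) / ((n : ℝ) + 2) ≤ a) (ha₂ : a < 1) (θ γ : ℝ)
    (f' f'' R' R'' : ℂ → ℂ)
    (hf'' : ∀ z ∈ ball (0 : ℂ) 1, HasDerivAt f' (f'' z) z)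
    (hf'ne : ∀ z ∈ ball (0 : ℂ) 1, f' z ≠ 0)
    (hR' : ∀ z ∈ ball (0 : ℂ) 1,
      R' z = f' z / (1 + Complex.exp ((θ - 2 * γ) * Complex.I) * z ^ n))
    (hR'' : ∀ z ∈ ball (0 : ℂ) 1, HasDerivAt R' (R'' z) z)
    (hre : ∀ z ∈ ball (0 : ℂ) 1, (1 + z * f'' z / f' z).re > 0) :
    ∀ z ∈ ball (0 : ℂ) 1,
      ‖-(Complex.exp (θ * Complex.I)) * z ^ n *
        (((((n : ℂ) - ((n : ℂ) + 2) * (a : ℂ)) / (1 - (a : ℂ))) + z * R'' z / R' z) /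
          ((2 / (1 - (a : ℂ))) + z * R'' z / R' z))‖ < 1 := by
  intro z hz
  have hzn : ‖z ^ n‖ < 1 := by
    rw [norm_pow]
    exact pow_lt_one₀ (norm_nonneg z) (mem_ball_zero_iff.mp hz) (by omega)
  set w := Complex.exp ((θ - 2 * γ) * Complex.I)
  have hu : ‖w * z ^ n‖ < 1 := by
    rwa [norm_mul, show ‖w‖ = 1 by simp [w, norm_exp], one_mul]
  have hlog := mul_deriv_div_eq_of_eventuallyEq_div_one_add_const_mul_pow
    (Filter.eventuallyEq_of_mem (isOpen_ball.mem_nhds hz) hR') (hf'' z hz) (hR'' z hz)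
    (hf'ne z hz) (one_add_ne_zero_of_norm_lt_one_s16 hu)
  have hpos := Complex.re_sub_mul_div_one_add_add_pos (hre z hz) hu (Nat.cast_nonneg' n)
  rw [ofReal_natCast, ← hlog] at hpos
  have hbound := norm_div_le_one_of_re_pos n a (z * R'' z / R' z) (by positivity) ha₁ ha₂ hpos
  push_cast at hbound
  rw [norm_mul, norm_mul, norm_neg, norm_exp_ofReal_mul_I, one_mul]
  exact (mul_le_of_le_one_right (norm_nonneg _) hbound).trans_lt hzn

open Metric Complex in
theorem stmt_16 (n : ℕ) (hn : 1 ≤ n) (a : ℝ)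
    (ha₁ : ((n : ℝ) - 2) / ((n : ℝ) + 2) ≤ a) (ha₂ : a < 1) (θ γ η : ℝ)
    (f f' f'' R' R'' : ℂ → ℂ)
    (hf0 : f 0 = 0)
    (hf' : ∀ z ∈ ball (0 : ℂ) 1, HasDerivAt f (f' z) z)
    (hf'eq : ∀ z ∈ ball (0 : ℂ) 1, z * f' z =
      z / ((1 + z * Complex.exp ((η + γ) * Complex.I)) *
        (1 + z * Complex.exp (-(η - γ) * Complex.I))))
    (hf'' : ∀ z ∈ ball (0 : ℂ) 1, HasDerivAt f' (f'' z) z)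
    (hf'ne : ∀ z ∈ ball (0 : ℂ) 1, f' z ≠ 0)
    (hR' : ∀ z ∈ ball (0 : ℂ) 1,
      R' z = f' z / (1 + Complex.exp ((θ - 2 * γ) * Complex.I) * z ^ n))
    (hR'' : ∀ z ∈ ball (0 : ℂ) 1, HasDerivAt R' (R'' z) z)
    (hre : ∀ z ∈ ball (0 : ℂ) 1, (1 + z * f'' z / f' z).re > 0) :
    ∀ z ∈ ball (0 : ℂ) 1,
      ‖-(Complex.exp (θ * Complex.I)) * z ^ n *
        (((((n : ℂ) - ((n : ℂ) + 2) * (a : ℂ)) / (1 - (a : ℂ))) + z * R'' z / R' z) /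
          ((2 / (1 - (a : ℂ))) + z * R'' z / R' z))‖ < 1 :=
  stmt_16_general n hn a ha₁ ha₂ θ γ f' f'' R' R'' hf'' hf'ne hR' hR'' hre
end
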